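/- Let α be a finite type with decidable equality, let n : ℕ, let x, y : Fin n → α, and let D ⊆ Fin n. Then E_D(x) = E_D(y) if and only if x and y p-match after discarding D, i.e., there exists a permutation π : Equiv.Perm α with π (x i) = y i for every i ∉ D. -/
import Mathlib


/-- The predecessor occurrence of position `i` in `x` avoiding the discarded set `D`:
the largest `j < i` with `j ∉ D` and `x j = x i`, as an element of `WithBot (Fin n)`. -/
def prevOccD {α : Type*} [DecidableEq α] {n : ℕ} (x : Fin n → α) (D : Finset (Fin n))
    (i : Fin n) : WithBot (Fin n) :=
  (Finset.univ.filter (fun j : Fin n => j < i ∧ j ∉ D ∧ x j = x i)).max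

/-- The `D`-encoding of a parameterized string: `E_D(x) i = 0` if `i ∈ D` or no previous
occurrence (outside `D`) exists, and `E_D(x) i = i - prev_{x,D}(i)` otherwise. -/
def encodeD {α : Type*} [DecidableEq α] {n : ℕ} (x : Fin n → α) (D : Finset (Fin n))
    (i : Fin n) : ℕ :=
  if i ∈ D then 0
  else
    match prevOccD x D i with
    | none => 0
    | some j => (i : ℕ) - (j : ℕ)

/-- key induction: equal encodings force matched equality patterns. -/
lemma encodeD_claim {α : Type*} [DecidableEq α] {n : ℕ} {x y : Fin n → α}
    {D : Finset (Fin n)} (h : encodeD x D = encodeD y D) :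
    ∀ N : ℕ, ∀ i : Fin n, (i : ℕ) < N → i ∉ D → ∀ j : Fin n, j ∉ D → j < i →
      (x j = x i ↔ y j = y i) := by
  intro N
  induction N with
  | zero => intro i hi; omega
  | succ N IH =>
    intro i hiN hiD j hjD hji
    have hx := congrFun h i
    cases m : prevOccD x D i with
    | bot =>
      have hxe : encodeD x D i = 0 := by simp [encodeD, hiD, m]
      have hyn : prevOccD y D i = ⊥ := by
        cases my : prevOccD y D i with
        | bot => rfl
        | coe q =>
          exfalso
          have hq := Finset.mem_of_max my
          simp only [Finset.mem_filter, Finset.mem_univ, true_and] at hq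
          have hqi : (q : ℕ) < (i : ℕ) := hq.1
          have hye : encodeD y D i = (i : ℕ) - (q : ℕ) := by simp [encodeD, hiD, my]
          omega
      have hxempty : (Finset.univ.filter
          (fun j : Fin n => j < i ∧ j ∉ D ∧ x j = x i)) = ∅ :=
        Finset.max_eq_bot.mp m
      have hyempty : (Finset.univ.filter
          (fun j : Fin n => j < i ∧ j ∉ D ∧ y j = y i)) = ∅ :=
        Finset.max_eq_bot.mp hyn
      constructor
      · intro hxx
        exfalso
        have : j ∈ (Finset.univ.filter
            (fun j : Fin n => j < i ∧ j ∉ D ∧ x j = x i)) := by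
          simp [hji, hjD, hxx]
        rw [hxempty] at this
        exact absurd this (Finset.notMem_empty j)
      · intro hyy
        exfalso
        have : j ∈ (Finset.univ.filter
            (fun j : Fin n => j < i ∧ j ∉ D ∧ y j = y i)) := by
          simp [hji, hjD, hyy]
        rw [hyempty] at this
        exact absurd this (Finset.notMem_empty j)
    | coe p =>
      have hp := Finset.mem_of_max m
      simp only [Finset.mem_filter, Finset.mem_univ, true_and] at hp
      obtain ⟨hpi, hpD, hpx⟩ := hp
      have hxe : encodeD x D i = (i : ℕ) - (p : ℕ) := by simp [encodeD, hiD, m]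
      have hyp : prevOccD y D i = (p : WithBot (Fin n)) := by
        cases my : prevOccD y D i with
        | bot =>
          exfalso
          have hye : encodeD y D i = 0 := by simp [encodeD, hiD, my]
          have hpi' : (p : ℕ) < (i : ℕ) := hpi
          omega
        | coe q =>
          have hq := Finset.mem_of_max my
          simp only [Finset.mem_filter, Finset.mem_univ, true_and] at hq
          have hqi : (q : ℕ) < (i : ℕ) := hq.1
          have hye : encodeD y D i = (i : ℕ) - (q : ℕ) := by simp [encodeD, hiD, my]
          have hpi' : (p : ℕ) < (i : ℕ) := hpi
          have : (q : ℕ) = (p : ℕ) := by omega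
          exact WithBot.coe_inj.mpr (Fin.ext this)
      have hqmem := Finset.mem_of_max hyp
      simp only [Finset.mem_filter, Finset.mem_univ, true_and] at hqmem
      have hpy : y p = y i := hqmem.2.2
      have hpN : (p : ℕ) < N := by
        have : (p : ℕ) < (i : ℕ) := hpi
        omega
      constructor
      · intro hxx
        have hjmem : j ∈ (Finset.univ.filter
            (fun j : Fin n => j < i ∧ j ∉ D ∧ x j = x i)) := by
          simp [hji, hjD, hxx]
        have hjle : (j : WithBot (Fin n)) ≤ prevOccD x D i := Finset.le_max hjmem
        rw [m] at hjle
        have hjp : j ≤ p := by exact_mod_cast hjle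
        rcases eq_or_lt_of_le hjp with rfl | hjp'
        · exact hpy
        · have hxjp : x j = x p := hxx.trans hpx.symm
          have := (IH p hpN hpD j hjD hjp').mp hxjp
          exact this.trans hpy
      · intro hyy
        have hjmem : j ∈ (Finset.univ.filter
            (fun j : Fin n => j < i ∧ j ∉ D ∧ y j = y i)) := by
          simp [hji, hjD, hyy]
        have hjle : (j : WithBot (Fin n)) ≤ prevOccD y D i := Finset.le_max hjmem
        rw [hyp] at hjle
        have hjp : j ≤ p := by exact_mod_cast hjle
        rcases eq_or_lt_of_le hjp with rfl | hjp'
        · exact hpx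
        · have hyjp : y j = y p := hyy.trans hpy.symm
          have := (IH p hpN hpD j hjD hjp').mpr hyjp
          exact this.trans hpx

theorem encodeD_eq_iff_pMatchAfterDiscard {α : Type*} [Fintype α] [DecidableEq α]
    (n : ℕ) (x y : Fin n → α) (D : Finset (Fin n)) :
    encodeD x D = encodeD y D ↔
      ∃ π : Equiv.Perm α, ∀ i ∉ D, π (x i) = y i := by
  constructor
  · intro h
    classical
    have full : ∀ i : Fin n, i ∉ D → ∀ j : Fin n, j ∉ D → (x i = x j ↔ y i = y j) := by
      intro i hi j hj
      rcases lt_trichotomy i j with hij | rfl | hij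
      · exact encodeD_claim h n j j.isLt hj i hi hij
      · simp
      · rw [eq_comm, eq_comm (a := y i)]
        exact encodeD_claim h n i i.isLt hi j hj hij
    set u : {i : Fin n // i ∉ D} → α := fun a => x a.1 with hu
    set v : {i : Fin n // i ∉ D} → α := fun a => y a.1 with hv
    have key : ∀ a b : {i : Fin n // i ∉ D}, u a = u b ↔ v a = v b := by
      intro a b; exact full a.1 a.2 b.1 b.2
    -- build bijection between ranges
    let f : Set.range u → Set.range v := fun a =>
      ⟨v a.2.choose, Set.mem_range_self _⟩
    have hf : Function.Bijective f := by
      constructor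
      · rintro ⟨a, ha⟩ ⟨b, hb⟩ hab
        have h1 : v ha.choose = v hb.choose := congrArg Subtype.val hab
        have h2 : u ha.choose = u hb.choose := (key _ _).mpr h1
        apply Subtype.ext
        show a = b
        exact (ha.choose_spec.symm.trans h2).trans hb.choose_spec
      · rintro ⟨b, hb⟩
        obtain ⟨a, rfl⟩ := hb
        refine ⟨⟨u a, Set.mem_range_self a⟩, ?_⟩
        apply Subtype.ext
        show v (Set.mem_range_self a : u a ∈ Set.range u).choose = v a
        exact (key _ _).mp (Set.mem_range_self a : u a ∈ Set.range u).choose_spec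
    let e : {c : α // c ∈ Set.range u} ≃ {c : α // c ∈ Set.range v} :=
      Equiv.ofBijective f hf
    refine ⟨e.extendSubtype, ?_⟩
    intro i hi
    have hmem : x i ∈ Set.range u := ⟨⟨i, hi⟩, rfl⟩
    rw [Equiv.extendSubtype_apply_of_mem e (x i) hmem]
    show v hmem.choose = y i
    have : u hmem.choose = u ⟨i, hi⟩ := hmem.choose_spec
    exact (key _ _).mp this
  · rintro ⟨π, hπ⟩
    funext i
    by_cases hiD : i ∈ D
    · simp [encodeD, hiD]
    · have hfilter : (Finset.univ.filter
          (fun j : Fin n => j < i ∧ j ∉ D ∧ x j = x i)) =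
          (Finset.univ.filter (fun j : Fin n => j < i ∧ j ∉ D ∧ y j = y i)) := by
        apply Finset.filter_congr
        intro j _
        constructor
        · rintro ⟨h1, h2, h3⟩
          exact ⟨h1, h2, by rw [← hπ j h2, ← hπ i hiD, h3]⟩
        · rintro ⟨h1, h2, h3⟩
          refine ⟨h1, h2, π.injective ?_⟩
          rw [hπ j h2, hπ i hiD, h3]
      have : prevOccD x D i = prevOccD y D i := by
        unfold prevOccD; rw [hfilter]
      simp [encodeD, hiD, this]
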